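/- Let C ⊆ ℝⁿ be a pointed n-dimensional closed convex cone, ω ⊆ Ω = S^{n-1} ∩ int C° a nonempty compact set, μ a nonzero finite Borel measure on ω, and p > 0. Then there exists K ∈ 𝒦(C,ω) such that for every continuous f : ω → (0,∞), γⁿ([f]) · ∫_ω f(u)^p dμ(u) ≤ γⁿ(K) · ∫_ω (−h_K(u))^p dμ(u); that is, the functional I_μ(f) = γⁿ([f]) ∫_ω f^p dμ attains its supremum over C⁺(ω) at the (absolute) support function of some K ∈ 𝒦(C,ω). -/

import Mathlib

open MeasureTheory Metric Set Filter
open scoped RealInnerProductSpace Pointwise Topology ENNReal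

noncomputable section

/-- `ℝⁿ` as Euclidean space. -/
abbrev En (n : ℕ) := EuclideanSpace ℝ (Fin n)

/-- The standard Gaussian measure of a set `A ⊆ ℝⁿ`:
`γⁿ(A) = (2π)^{-n/2} ∫_A e^{-‖x‖²/2} dx`. -/
def gaussianMeasure (n : ℕ) (A : Set (En n)) : ℝ :=
  (2 * Real.pi) ^ (-(n : ℝ) / 2) * ∫ x in A, Real.exp (-‖x‖ ^ 2 / 2)

/-- A pointed (no lines), `n`-dimensional (nonempty interior), closed convex cone. -/
def IsPointedCone {n : ℕ} (C : Set (En n)) : Prop :=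
  IsClosed C ∧ Convex ℝ C ∧ (∀ x ∈ C, ∀ c : ℝ, 0 ≤ c → c • x ∈ C) ∧
    (interior C).Nonempty ∧ ∀ x ∈ C, -x ∈ C → x = 0

/-- The polar cone `C° = {x : ⟨x,y⟩ ≤ 0 ∀ y ∈ C}`. -/
def polarCone {n : ℕ} (C : Set (En n)) : Set (En n) := {x | ∀ y ∈ C, ⟪x, y⟫ ≤ 0}

/-- `Ω = S^{n-1} ∩ int C°`. -/
def OmegaSet {n : ℕ} (C : Set (En n)) : Set (En n) :=
  sphere (0 : En n) 1 ∩ interior (polarCone C)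

/-- A pseudo-cone: nonempty closed convex set not containing the origin with `λK ⊆ K` for `λ ≥ 1`. -/
def IsPseudoCone {n : ℕ} (K : Set (En n)) : Prop :=
  K.Nonempty ∧ IsClosed K ∧ Convex ℝ K ∧ (0 : En n) ∉ K ∧
    ∀ c : ℝ, 1 ≤ c → c • K ⊆ K

/-- The recession cone `rec K = {z : K + z ⊆ K}`. -/
def recessionCone {n : ℕ} (K : Set (En n)) : Set (En n) := {z | ∀ x ∈ K, x + z ∈ K}

/-- A `C`-pseudo-cone: a pseudo-cone whose recession cone is `C`. -/
def IsCPseudoCone {n : ℕ} (C K : Set (En n)) : Prop :=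
  IsPseudoCone K ∧ recessionCone K = C

/-- The support function `h_K(u) = sup {⟨x,u⟫ : x ∈ K}`. -/
def suppFn {n : ℕ} (K : Set (En n)) (u : En n) : ℝ := sSup ((fun x => ⟪x, u⟫) '' K)

/-- The Wulff shape `[f] = C ∩ ⋂_{u ∈ ω} {y : ⟨y,u⟩ ≤ -f(u)}`. -/
def wulffShape {n : ℕ} (C ω : Set (En n)) (f : En n → ℝ) : Set (En n) :=
  C ∩ ⋂ u ∈ ω, {y | ⟪y, u⟫ ≤ -f u}

/-- `K ∈ 𝒦(C,ω)`: `K` is a `C`-pseudo-cone that is `C`-determined by `ω`. -/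
def InKClass {n : ℕ} (C ω K : Set (En n)) : Prop :=
  IsCPseudoCone C K ∧ K = C ∩ ⋂ u ∈ ω, {y | ⟪y, u⟫ ≤ suppFn K u}

end

/-!
Replacing `f` by `-h_{[f]}` leaves `[f]` unchanged and can only increase `∫ f^p dμ`, so it
suffices to compare the functions `-h_K` for Wulff shapes `K`. Since `ω` is a compact subset of
`int C°`, there is `ρ > 0` with `⟪x, u⟫ ≤ -ρ‖x‖` on `C × ω`; hence, if `d` is the distance from
the origin to `K`, then `ρ d ≤ -h_K ≤ d` on `ω` and `-h_K` is `d/ρ`-Lipschitz. If `d` is small,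
`I_μ(-h_K) ≤ γⁿ(ℝⁿ) d^p μ(ω)` is small; if `d` is large, the Gaussian tail `γⁿ(K) ≲ e^{-d²/4}`
makes it small; in both cases `I_μ(-h_K) < I_μ(1)`. The remaining functions `-h_K` lie in an
equicontinuous, uniformly bounded family, compact by Arzelà–Ascoli, on which `I_μ` is upper
semicontinuous (`γⁿ` is continuous along decreasing Wulff shapes, the integral by dominated
convergence). A maximizer `g` there maximizes `I_μ` on `C⁺(ω)`, and `K = [g]` works because
`I_μ(g) ≤ I_μ(-h_{[g]})`.
-/

section Gaussian

variable {n : ℕ}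

lemma integrable_exp_neg_norm_sq_div {b : ℝ} (hb : 0 < b) :
    Integrable (fun x : En n => Real.exp (-‖x‖ ^ 2 / b)) := by
  have h : (fun x : En n => Real.exp (-‖x‖ ^ 2 / b)) = fun x => Real.exp (-b⁻¹ * ‖x‖ ^ 2) := by
    ext x; ring_nf
  rw [h]
  refine Integrable.of_integral_ne_zero ?_
  rw [GaussianFourier.integral_rexp_neg_mul_sq_norm (inv_pos.mpr hb)]
  positivity

lemma gaussianMeasure_nonneg (A : Set (En n)) : 0 ≤ gaussianMeasure n A :=
  mul_nonneg (by positivity) (integral_nonneg fun _ => (Real.exp_pos _).le)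

lemma gaussianMeasure_mono {A B : Set (En n)} (h : A ⊆ B) :
    gaussianMeasure n A ≤ gaussianMeasure n B :=
  mul_le_mul_of_nonneg_left
    (setIntegral_mono_set (integrable_exp_neg_norm_sq_div two_pos).integrableOn
      (.of_forall fun _ => (Real.exp_pos _).le) h.eventuallyLE) (by positivity)

lemma gaussianMeasure_pos_of_closedBall_subset {A : Set (En n)} {x : En n} {r : ℝ} (hr : 0 < r)
    (h : closedBall x r ⊆ A) : 0 < gaussianMeasure n A := by
  refine lt_of_lt_of_le (mul_pos (by positivity) ?_) (gaussianMeasure_mono h)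
  rw [setIntegral_pos_iff_support_of_nonneg_ae (.of_forall fun _ => (Real.exp_pos _).le)
    (integrable_exp_neg_norm_sq_div two_pos).integrableOn]
  simpa [Function.support, (Real.exp_pos _).ne'] using measure_closedBall_pos volume x hr

lemma tendsto_gaussianMeasure_iInter {A : ℕ → Set (En n)} (hA : ∀ k, MeasurableSet (A k))
    (hanti : Antitone A) :
    Tendsto (fun k => gaussianMeasure n (A k)) atTop (𝓝 (gaussianMeasure n (⋂ k, A k))) :=
  (tendsto_setIntegral_of_antitone hA hanti
    ⟨0, (integrable_exp_neg_norm_sq_div two_pos).integrableOn⟩).const_mul _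

lemma exists_gaussianMeasure_le_of_le_norm :
    ∃ c : ℝ, ∀ (A : Set (En n)) (d : ℝ), MeasurableSet A → 0 ≤ d → (∀ x ∈ A, d ≤ ‖x‖) →
      gaussianMeasure n A ≤ c * Real.exp (-d ^ 2 / 4) := by
  set κ : ℝ := (2 * Real.pi) ^ (-(n : ℝ) / 2)
  refine ⟨κ * ∫ x : En n, Real.exp (-‖x‖ ^ 2 / 4), fun A d hA hd hAd => ?_⟩
  have hint := integrable_exp_neg_norm_sq_div (n := n) (b := 4) (by norm_num)
  have hpt : ∀ x ∈ A, Real.exp (-‖x‖ ^ 2 / 2) ≤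
      Real.exp (-d ^ 2 / 4) * Real.exp (-‖x‖ ^ 2 / 4) := fun x hx => by
    rw [← Real.exp_add, Real.exp_le_exp]
    nlinarith [hAd x hx]
  calc gaussianMeasure n A
      ≤ κ * ∫ x in A, Real.exp (-d ^ 2 / 4) * Real.exp (-‖x‖ ^ 2 / 4) :=
        mul_le_mul_of_nonneg_left (setIntegral_mono_on
          (integrable_exp_neg_norm_sq_div two_pos).integrableOn
          (hint.const_mul _).integrableOn hA hpt) (by positivity)
    _ ≤ κ * (Real.exp (-d ^ 2 / 4) * ∫ x : En n, Real.exp (-‖x‖ ^ 2 / 4)) := by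
        rw [integral_const_mul]
        gcongr κ * (_ * ?_)
        exact setIntegral_le_integral hint (.of_forall fun _ => (Real.exp_pos _).le)
    _ = κ * (∫ x : En n, Real.exp (-‖x‖ ^ 2 / 4)) * Real.exp (-d ^ 2 / 4) := by ring

/-- Sets close to the origin have small `γⁿ(A) d^p` because `d^p` is small, sets far from it
because of the Gaussian tail. -/
lemma exists_gaussianMeasure_mul_rpow_lt {p : ℝ} (hp : 0 < p) {ε : ℝ} (hε : 0 < ε) :
    ∃ a > 0, ∃ b, ∀ (A : Set (En n)) (d : ℝ), MeasurableSet A → 0 ≤ d → d ∉ Icc a b →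
      (∀ x ∈ A, d ≤ ‖x‖) → gaussianMeasure n A * d ^ p < ε := by
  have hsmall : Tendsto (fun d : ℝ => gaussianMeasure n univ * d ^ p) (𝓝 0) (𝓝 0) := by
    simpa [Real.zero_rpow hp.ne'] using
      ((Real.continuousAt_rpow_const 0 p (Or.inr hp.le)).tendsto).const_mul (gaussianMeasure n univ)
  obtain ⟨a, ha, hsmall⟩ := Metric.eventually_nhds_iff.mp (hsmall.eventually (gt_mem_nhds hε))
  obtain ⟨c, hc⟩ := exists_gaussianMeasure_le_of_le_norm (n := n)
  have hlarge : Tendsto (fun d : ℝ => c * (d ^ p * Real.exp (-d ^ 2 / 4))) atTop (𝓝 0) := by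
    have := ((tendsto_rpow_mul_exp_neg_mul_atTop_nhds_zero (p / 2) (1 / 4) (by norm_num)).comp
      (tendsto_pow_atTop two_ne_zero)).const_mul c
    rw [mul_zero] at this
    refine this.congr' ?_
    filter_upwards [eventually_ge_atTop 0] with d hd
    simp only [Function.comp, ← Real.rpow_natCast, ← Real.rpow_mul hd]
    ring_nf
  obtain ⟨b, hlarge⟩ := eventually_atTop.mp (hlarge.eventually (gt_mem_nhds hε))
  refine ⟨a, ha, b, fun A d hA hd hdab hAd => ?_⟩
  rcases lt_or_ge d a with hda | had
  · calc gaussianMeasure n A * d ^ p ≤ gaussianMeasure n univ * d ^ p :=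
          mul_le_mul_of_nonneg_right (gaussianMeasure_mono (subset_univ A)) (Real.rpow_nonneg hd p)
      _ < ε := hsmall (by rwa [Real.dist_0_eq_abs, abs_of_nonneg hd])
  · have hbd : b ≤ d := (lt_of_not_ge fun h => hdab ⟨had, h⟩).le
    calc gaussianMeasure n A * d ^ p ≤ c * Real.exp (-d ^ 2 / 4) * d ^ p :=
          mul_le_mul_of_nonneg_right (hc A d hA hd hAd) (Real.rpow_nonneg hd p)
      _ = c * (d ^ p * Real.exp (-d ^ 2 / 4)) := by ring
      _ < ε := hlarge d hbd

end Gaussian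

lemma exists_ne_zero_mem_interior {E : Type*} [NormedAddCommGroup E] [NormedSpace ℝ E]
    [Nontrivial E] {s : Set E} (hs : (interior s).Nonempty) : ∃ e ∈ interior s, e ≠ 0 :=
  (dense_compl_singleton (0 : E)).inter_open_nonempty _ isOpen_interior hs

lemma add_mem_of_convex_of_smul_mem {E : Type*} [AddCommGroup E] [Module ℝ E] {s : Set E}
    (hsconv : Convex ℝ s) (hscone : ∀ x ∈ s, ∀ c : ℝ, 0 ≤ c → c • x ∈ s) {x y : E} (hx : x ∈ s)
    (hy : y ∈ s) : x + y ∈ s := by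
  have := hscone _ (hsconv hx hy (by norm_num : (0 : ℝ) ≤ 1 / 2) (by norm_num : (0 : ℝ) ≤ 1 / 2)
    (by norm_num)) 2 (by norm_num)
  rwa [smul_add, smul_smul, smul_smul, show (2 : ℝ) * (1 / 2) = 1 by norm_num, one_smul,
    one_smul] at this

section WulffShape

variable {n : ℕ} {C ω K : Set (En n)} {f g : En n → ℝ} {ρ : ℝ}

/-- For unit vectors `u ∈ ω`: the angle between `u` and any nonzero `x ∈ C` is at least
`π/2 + arcsin ρ`. -/
def IsUniformlyObtuse (C ω : Set (En n)) (ρ : ℝ) : Prop :=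
  0 < ρ ∧ ∀ u ∈ ω, ∀ x ∈ C, ⟪x, u⟫ ≤ -(ρ * ‖x‖)

lemma IsUniformlyObtuse.subset_polarCone (hρ : IsUniformlyObtuse C ω ρ) :
    ω ⊆ polarCone C := fun u hu x hx => by
  rw [real_inner_comm]
  nlinarith [hρ.2 u hu x hx, norm_nonneg x, hρ.1]

lemma exists_isUniformlyObtuse (hωc : IsCompact ω) (hω : ω ⊆ interior (polarCone C)) :
    ∃ ρ, IsUniformlyObtuse C ω ρ := by
  obtain ⟨ρ, hρ, hρω⟩ := hωc.exists_cthickening_subset_open isOpen_interior hω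
  refine ⟨ρ, hρ, fun u hu x hx => ?_⟩
  rcases eq_or_ne x 0 with rfl | hx0
  · simp
  have hxn : 0 < ‖x‖ := norm_pos_iff.mpr hx0
  -- `u` moved by `ρ` in the direction of `x` stays in `C°`
  have hmem : u + (ρ / ‖x‖) • x ∈ polarCone C := by
    refine interior_subset (hρω (mem_cthickening_of_dist_le _ u ρ ω hu ?_))
    rw [dist_eq_norm, add_sub_cancel_left, norm_smul, Real.norm_of_nonneg (by positivity),
      div_mul_cancel₀ _ hxn.ne']
  have := hmem x hx
  rw [inner_add_left, real_inner_smul_left, real_inner_self_eq_norm_sq, real_inner_comm] at this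
  have h : ρ / ‖x‖ * ‖x‖ ^ 2 = ρ * ‖x‖ := by field_simp
  linarith

lemma mem_wulffShape {y : En n} : y ∈ wulffShape C ω f ↔ y ∈ C ∧ ∀ u ∈ ω, ⟪y, u⟫ ≤ -f u := by
  simp [wulffShape]

lemma wulffShape_subset : wulffShape C ω f ⊆ C := inter_subset_left

lemma wulffShape_anti (h : ∀ u ∈ ω, f u ≤ g u) : wulffShape C ω g ⊆ wulffShape C ω f := by
  intro y hy
  rw [mem_wulffShape] at hy ⊢
  exact ⟨hy.1, fun u hu => (hy.2 u hu).trans (neg_le_neg (h u hu))⟩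

lemma wulffShape_congr (h : ∀ u ∈ ω, f u = g u) : wulffShape C ω f = wulffShape C ω g :=
  (wulffShape_anti fun u hu => (h u hu).ge).antisymm (wulffShape_anti fun u hu => (h u hu).le)

lemma isClosed_wulffShape (hC : IsClosed C) : IsClosed (wulffShape C ω f) :=
  hC.inter (isClosed_biInter fun _ _ => isClosed_le (continuous_id.inner continuous_const)
    continuous_const)

lemma convex_wulffShape (hC : Convex ℝ C) : Convex ℝ (wulffShape C ω f) :=
  hC.inter (convex_iInter₂ fun u _ => convex_halfSpace_le (innerₛₗ ℝ |>.flip u).isLinear _)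

/-- Far out along an interior ray of `C`, a ball of any radius fits in `C` and lies deep in every
half-space `⟪y, u⟫ ≤ -T`. -/
lemma exists_closedBall_subset_wulffShape_const [Nontrivial (En n)]
    (hCcone : ∀ x ∈ C, ∀ c : ℝ, 0 ≤ c → c • x ∈ C) (hCint : (interior C).Nonempty)
    (hρ : IsUniformlyObtuse C ω ρ) (hω1 : ω ⊆ closedBall 0 1) (T : ℝ) {r : ℝ} (hr : 0 ≤ r) :
    ∃ x, closedBall x r ⊆ wulffShape C ω (fun _ => T) := by
  obtain ⟨e, heC, he⟩ := exists_ne_zero_mem_interior hCint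
  obtain ⟨ε, hε, hball⟩ := Metric.isOpen_iff.mp isOpen_interior e heC
  have hen : 0 < ‖e‖ := norm_pos_iff.mpr he
  set R := max ((r + 1) / ε) ((T + r) / (ρ * ‖e‖))
  have hR : 0 < R := lt_max_of_lt_left (by positivity)
  have hrR : r / R < ε := by
    rw [div_lt_iff₀ hR]
    nlinarith [(div_le_iff₀ hε).mp (le_max_left _ _ : (r + 1) / ε ≤ R)]
  have hTR : T + r ≤ ρ * (R * ‖e‖) := by
    nlinarith [(div_le_iff₀ (by have := hρ.1; positivity)).mp
      (le_max_right _ _ : (T + r) / (ρ * ‖e‖) ≤ R)]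
  refine ⟨R • e, fun y hy => mem_wulffShape.mpr ⟨?_, fun u hu => ?_⟩⟩
  · have hball' : closedBall (R • e) r = R • closedBall e (r / R) := by
      rw [_root_.smul_closedBall _ _ (by positivity), Real.norm_of_nonneg hR.le,
        mul_div_cancel₀ _ hR.ne']
    rw [hball'] at hy
    obtain ⟨z, hz, rfl⟩ := hy
    exact hCcone z (interior_subset (hball (closedBall_subset_ball hrR hz))) R hR.le
  · have hRe : ⟪R • e, u⟫ ≤ -(ρ * (R * ‖e‖)) := by
      simpa [norm_smul, Real.norm_of_nonneg hR.le] using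
        hρ.2 u hu _ (hCcone e (interior_subset heC) R hR.le)
    have hyR : ⟪y - R • e, u⟫ ≤ r :=
      (real_inner_le_norm _ _).trans ((mul_le_of_le_one_right (norm_nonneg _)
        (mem_closedBall_zero_iff.mp (hω1 hu))).trans (mem_closedBall_iff_norm.mp hy))
    rw [inner_sub_left] at hyR
    linarith

lemma wulffShape_nonempty [Nontrivial (En n)]
    (hCcone : ∀ x ∈ C, ∀ c : ℝ, 0 ≤ c → c • x ∈ C) (hCint : (interior C).Nonempty)
    (hρ : IsUniformlyObtuse C ω ρ) (hω1 : ω ⊆ closedBall 0 1) (hf : BddAbove (f '' ω)) :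
    (wulffShape C ω f).Nonempty := by
  obtain ⟨T, hT⟩ := hf
  obtain ⟨x, hx⟩ := exists_closedBall_subset_wulffShape_const hCcone hCint hρ hω1 T le_rfl
  exact ⟨x, wulffShape_anti (fun u hu => hT (mem_image_of_mem f hu))
    (hx (mem_closedBall_self le_rfl))⟩

lemma recessionCone_wulffShape (hCc : IsClosed C) (hCconv : Convex ℝ C)
    (hCcone : ∀ x ∈ C, ∀ c : ℝ, 0 ≤ c → c • x ∈ C) (hωC : ω ⊆ polarCone C)
    (hne : (wulffShape C ω f).Nonempty) : recessionCone (wulffShape C ω f) = C := by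
  ext z
  refine ⟨fun hz => ?_, fun hz x hx => ?_⟩
  · obtain ⟨x₀, hx₀⟩ := hne
    have hmem : ∀ k : ℕ, x₀ + k • z ∈ wulffShape C ω f := fun k => by
      induction k with
      | zero => simpa using hx₀
      | succ k ih => simpa [succ_nsmul, add_assoc] using hz _ ih
    -- `z` is the limit of `(x₀ + k z) / k ∈ C`
    have hlim : Tendsto (fun k : ℕ => (k : ℝ)⁻¹ • (x₀ + k • z)) atTop (𝓝 z) := by
      have h0 : Tendsto (fun k : ℕ => (k : ℝ)⁻¹ • x₀ + z) atTop (𝓝 z) := by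
        simpa using ((tendsto_inv_atTop_nhds_zero_nat (𝕜 := ℝ)).smul_const x₀).add_const z
      refine h0.congr' ?_
      filter_upwards [eventually_ge_atTop 1] with k hk
      rw [smul_add, ← Nat.cast_smul_eq_nsmul ℝ k z, smul_smul,
        inv_mul_cancel₀ (by positivity), one_smul]
    exact hCc.mem_of_tendsto hlim (.of_forall fun k =>
      hCcone _ (wulffShape_subset (hmem k)) _ (by positivity))
  · rw [mem_wulffShape] at hx ⊢
    refine ⟨add_mem_of_convex_of_smul_mem hCconv hCcone hx.1 hz, fun u hu => ?_⟩
    rw [inner_add_left, real_inner_comm u z]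
    linarith [hx.2 u hu, hωC hu z hz]

lemma bddAbove_inner_image (hωC : ω ⊆ polarCone C) (hK : K ⊆ C) {u : En n} (hu : u ∈ ω) :
    BddAbove ((fun x => ⟪x, u⟫) '' K) :=
  ⟨0, by rintro _ ⟨x, hx, rfl⟩; exact (real_inner_comm u x).trans_le (hωC hu x (hK hx))⟩

lemma inner_le_suppFn (hωC : ω ⊆ polarCone C) (hK : K ⊆ C) {u x : En n} (hu : u ∈ ω)
    (hx : x ∈ K) : ⟪x, u⟫ ≤ suppFn K u :=
  le_csSup (bddAbove_inner_image hωC hK hu) ⟨x, hx, rfl⟩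

lemma suppFn_le (hK : K.Nonempty) {u : En n} {c : ℝ} (h : ∀ x ∈ K, ⟪x, u⟫ ≤ c) :
    suppFn K u ≤ c :=
  csSup_le (hK.image _) (by rintro _ ⟨x, hx, rfl⟩; exact h x hx)

lemma suppFn_wulffShape_le (hne : (wulffShape C ω f).Nonempty) {u : En n} (hu : u ∈ ω) :
    suppFn (wulffShape C ω f) u ≤ -f u :=
  suppFn_le hne fun _ hx => (mem_wulffShape.mp hx).2 u hu

lemma wulffShape_neg_suppFn (hωC : ω ⊆ polarCone C) (hne : (wulffShape C ω f).Nonempty) :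
    wulffShape C ω (fun u => -suppFn (wulffShape C ω f) u) = wulffShape C ω f := by
  refine (wulffShape_anti fun u hu => ?_).antisymm fun y hy => ?_
  · linarith [suppFn_wulffShape_le hne hu]
  · exact mem_wulffShape.mpr ⟨wulffShape_subset hy, fun u hu => by
      rw [neg_neg]; exact inner_le_suppFn hωC wulffShape_subset hu hy⟩

lemma inKClass_wulffShape (hCc : IsClosed C) (hCconv : Convex ℝ C)
    (hCcone : ∀ x ∈ C, ∀ c : ℝ, 0 ≤ c → c • x ∈ C) (hωC : ω ⊆ polarCone C) (hω : ω.Nonempty)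
    (hf : ∀ u ∈ ω, 0 < f u) (hne : (wulffShape C ω f).Nonempty) :
    InKClass C ω (wulffShape C ω f) := by
  refine ⟨⟨⟨hne, isClosed_wulffShape hCc, convex_wulffShape hCconv, fun h0 => ?_,
    fun c hc => ?_⟩, recessionCone_wulffShape hCc hCconv hCcone hωC hne⟩, ?_⟩
  · obtain ⟨u, hu⟩ := hω
    have := (mem_wulffShape.mp h0).2 u hu
    rw [inner_zero_left] at this
    linarith [hf u hu]
  · rintro _ ⟨x, hx, rfl⟩
    rw [mem_wulffShape] at hx ⊢
    refine ⟨hCcone x hx.1 c (by linarith), fun u hu => ?_⟩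
    rw [real_inner_smul_left]
    nlinarith [hx.2 u hu, hf u hu]
  · conv_lhs => rw [← wulffShape_neg_suppFn hωC hne]
    simp only [wulffShape, neg_neg]

lemma neg_suppFn_mem_Icc (hρ : IsUniformlyObtuse C ω ρ) (hω1 : ω ⊆ closedBall 0 1) (hK : K ⊆ C)
    (hne : K.Nonempty) {u : En n} (hu : u ∈ ω) :
    -suppFn K u ∈ Icc (ρ * infDist 0 K) (infDist 0 K) := by
  constructor
  · have : suppFn K u ≤ -(ρ * infDist 0 K) := suppFn_le hne fun x hx => by
      have hdist : infDist 0 K ≤ ‖x‖ := by simpa using infDist_le_dist_of_mem (x := 0) hx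
      nlinarith [hρ.2 u hu x (hK hx), hρ.1]
    linarith
  · refine (le_infDist hne).mpr fun x hx => ?_
    have hxu : ‖x‖ * ‖u‖ ≤ ‖x‖ :=
      mul_le_of_le_one_right (norm_nonneg _) (mem_closedBall_zero_iff.mp (hω1 hu))
    rw [dist_zero_left]
    linarith [inner_le_suppFn hρ.subset_polarCone hK hu hx,
      neg_le_of_abs_le (abs_real_inner_le_norm x u)]

lemma lipschitzOnWith_neg_suppFn (hρ : IsUniformlyObtuse C ω ρ) (hω1 : ω ⊆ closedBall 0 1)
    (hK : K ⊆ C) (hne : K.Nonempty) :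
    LipschitzOnWith (infDist 0 K / ρ).toNNReal (fun u => -suppFn K u) ω := by
  set d := infDist 0 K
  have key : ∀ u ∈ ω, ∀ v ∈ ω, suppFn K u ≤ suppFn K v + d / ρ * ‖u - v‖ := by
    intro u hu v hv
    refine suppFn_le hne fun x hx => ?_
    rcases le_or_gt ‖x‖ (d / ρ) with hxd | hxd
    · calc ⟪x, u⟫ = ⟪x, v⟫ + ⟪x, u - v⟫ := by rw [inner_sub_right]; ring
        _ ≤ suppFn K v + ‖x‖ * ‖u - v‖ :=
          add_le_add (inner_le_suppFn hρ.subset_polarCone hK hv hx) (real_inner_le_norm _ _)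
        _ ≤ suppFn K v + d / ρ * ‖u - v‖ := by gcongr
    -- points of `K` of norm beyond `d / ρ` satisfy `⟪x, u⟫ < -d ≤ h_K(v)`
    · have hdx : d < ρ * ‖x‖ := by rwa [div_lt_iff₀' hρ.1] at hxd
      have : 0 ≤ d / ρ * ‖u - v‖ := mul_nonneg (div_nonneg infDist_nonneg hρ.1.le) (norm_nonneg _)
      linarith [hρ.2 u hu x (hK hx), (neg_suppFn_mem_Icc hρ hω1 hK hne hv).2]
  refine LipschitzOnWith.of_dist_le_mul fun u hu v hv => ?_
  rw [Real.dist_eq, Real.coe_toNNReal _ (div_nonneg infDist_nonneg hρ.1.le), dist_eq_norm, abs_le]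
  have huv := key u hu v hv
  have hvu := key v hv u hu
  rw [norm_sub_rev] at hvu
  constructor <;> linarith

end WulffShape

open scoped BoundedContinuousFunction

lemma continuousOn_extend_val {X : Type*} [TopologicalSpace X] {s : Set X} {g : s → ℝ}
    (hg : Continuous g) : ContinuousOn (Function.extend Subtype.val g 0) s := by
  rw [continuousOn_iff_continuous_domRestrict]
  convert hg using 1
  exact funext fun u => Function.extend_val_apply u.2

lemma BoundedContinuousFunction.isCompact_setOf_lipschitzWith_mem_Icc {α : Type*}
    [PseudoMetricSpace α] [CompactSpace α] (L : NNReal) (m M : ℝ) :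
    IsCompact {g : α →ᵇ ℝ | LipschitzWith L g ∧ ∀ x, g x ∈ Icc m M} := by
  refine arzela_ascoli₂ (Icc m M) isCompact_Icc _ ?_ (fun g x hg => hg.2 x) ?_
  · have hL : IsClosed {g : α →ᵇ ℝ | LipschitzWith L g} :=
      (isClosed_setOfPred_lipschitzWith (α := α) (β := ℝ) L).preimage continuous_coe
    have hI : IsClosed {g : α →ᵇ ℝ | ∀ x, g x ∈ Icc m M} := by
      simp only [ofPred_forall]
      exact isClosed_iInter fun x => isClosed_Icc.preimage (continuous_eval_const x)
    exact hL.inter hI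
  · exact Metric.equicontinuous_of_continuity_modulus (fun t => L * t)
      (by simpa using (continuous_const_mul (L : ℝ)).tendsto 0) _ fun x y g => g.2.1.dist_le_mul x y

section Functional

variable {n : ℕ} {C ω : Set (En n)} {μ : Measure (En n)} {p ρ : ℝ} {f g : En n → ℝ}

lemma setIntegral_rpow_mono [IsFiniteMeasureOnCompacts μ] (hωc : IsCompact ω) (hp : 0 ≤ p)
    (hf : ContinuousOn f ω) (hg : ContinuousOn g ω) (hf0 : ∀ u ∈ ω, 0 ≤ f u)
    (hfg : ∀ u ∈ ω, f u ≤ g u) : ∫ u in ω, f u ^ p ∂μ ≤ ∫ u in ω, g u ^ p ∂μ :=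
  setIntegral_mono_on ((hf.rpow_const fun _ _ => Or.inr hp).integrableOn_compact hωc)
    ((hg.rpow_const fun _ _ => Or.inr hp).integrableOn_compact hωc) hωc.isClosed.measurableSet
    fun u hu => Real.rpow_le_rpow (hf0 u hu) (hfg u hu) hp

lemma setIntegral_rpow_le [IsFiniteMeasure μ] (hp : 0 ≤ p) {c : ℝ} (hf0 : ∀ u ∈ ω, 0 ≤ f u)
    (hfc : ∀ u ∈ ω, f u ≤ c) : ∫ u in ω, f u ^ p ∂μ ≤ c ^ p * μ.real ω :=
  (le_abs_self _).trans <| norm_setIntegral_le_of_norm_le_const (measure_lt_top μ ω) fun u hu => by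
    rw [Real.norm_of_nonneg (Real.rpow_nonneg (hf0 u hu) p)]
    exact Real.rpow_le_rpow (hf0 u hu) (hfc u hu) hp

lemma tendsto_setIntegral_add_rpow [IsFiniteMeasure μ] (hωc : IsCompact ω) (hp : 0 ≤ p)
    (hf : ContinuousOn f ω) (hf0 : ∀ u ∈ ω, 0 ≤ f u) :
    Tendsto (fun k : ℕ => ∫ u in ω, (f u + 1 / (k + 1)) ^ p ∂μ) atTop
      (𝓝 (∫ u in ω, f u ^ p ∂μ)) := by
  obtain ⟨M, hM⟩ := hωc.bddAbove_image hf
  have hω := hωc.isClosed.measurableSet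
  refine tendsto_integral_of_dominated_convergence (fun _ => (M + 1) ^ p) (fun k => ?_)
    (integrable_const _) (fun k => ?_) (.of_forall fun u => ?_)
  · exact ((hf.add continuousOn_const).rpow_const fun _ _ => Or.inr hp).aestronglyMeasurable hω
  · filter_upwards [ae_restrict_mem hω] with u hu
    have hk : 1 / ((k : ℝ) + 1) ≤ 1 := div_le_one_of_le₀ (by simp) (by positivity)
    have h0 : 0 ≤ f u + 1 / (k + 1) := add_nonneg (hf0 u hu) (by positivity)
    rw [Real.norm_of_nonneg (Real.rpow_nonneg h0 p)]
    exact Real.rpow_le_rpow h0 (by linarith [hM (mem_image_of_mem f hu)]) hp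
  · simpa [Function.comp_def] using (Real.continuousAt_rpow_const _ p (Or.inr hp)).tendsto.comp
      (tendsto_one_div_add_atTop_nhds_zero_nat.const_add (f u))

/-- The paper's `I_μ(f)`. -/
noncomputable def wulffFunctional (C ω : Set (En n)) (μ : Measure (En n)) (p : ℝ)
    (f : En n → ℝ) : ℝ :=
  gaussianMeasure n (wulffShape C ω f) * ∫ u in ω, f u ^ p ∂μ

lemma wulffFunctional_congr (hω : MeasurableSet ω) (h : ∀ u ∈ ω, f u = g u) :
    wulffFunctional C ω μ p f = wulffFunctional C ω μ p g := by
  rw [wulffFunctional, wulffFunctional, wulffShape_congr h]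
  congr 1
  exact setIntegral_congr_fun hω fun u hu => by simp only [h u hu]

lemma wulffFunctional_le_neg_suppFn [IsFiniteMeasure μ] (hρ : IsUniformlyObtuse C ω ρ)
    (hω1 : ω ⊆ closedBall 0 1) (hωc : IsCompact ω) (hp : 0 ≤ p) (hf : ContinuousOn f ω)
    (hf0 : ∀ u ∈ ω, 0 ≤ f u) (hne : (wulffShape C ω f).Nonempty) :
    wulffFunctional C ω μ p f ≤
      wulffFunctional C ω μ p (fun u => -suppFn (wulffShape C ω f) u) := by
  rw [wulffFunctional, wulffFunctional, wulffShape_neg_suppFn hρ.subset_polarCone hne]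
  exact mul_le_mul_of_nonneg_left (setIntegral_rpow_mono hωc hp hf
    (lipschitzOnWith_neg_suppFn hρ hω1 wulffShape_subset hne).continuousOn hf0
    fun u hu => by linarith [suppFn_wulffShape_le hne hu]) (gaussianMeasure_nonneg _)

lemma wulffFunctional_neg_suppFn_le [IsFiniteMeasure μ] (hρ : IsUniformlyObtuse C ω ρ)
    (hω1 : ω ⊆ closedBall 0 1) (hp : 0 ≤ p) (hne : (wulffShape C ω f).Nonempty) :
    wulffFunctional C ω μ p (fun u => -suppFn (wulffShape C ω f) u) ≤
      gaussianMeasure n (wulffShape C ω f) * (infDist 0 (wulffShape C ω f) ^ p * μ.real ω) := by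
  have hbounds := fun u (hu : u ∈ ω) => neg_suppFn_mem_Icc hρ hω1 wulffShape_subset hne hu
  rw [wulffFunctional, wulffShape_neg_suppFn hρ.subset_polarCone hne]
  exact mul_le_mul_of_nonneg_left (setIntegral_rpow_le hp
    (fun u hu => (mul_nonneg hρ.1.le infDist_nonneg).trans (hbounds u hu).1)
    fun u hu => (hbounds u hu).2) (gaussianMeasure_nonneg _)

lemma tendsto_gaussianMeasure_wulffShape_sub (hCc : IsClosed C) (f : En n → ℝ) :
    Tendsto (fun k : ℕ => gaussianMeasure n (wulffShape C ω fun u => f u - 1 / (k + 1))) atTop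
      (𝓝 (gaussianMeasure n (wulffShape C ω f))) := by
  have hanti : Antitone fun k : ℕ => wulffShape C ω fun u => f u - 1 / ((k : ℝ) + 1) :=
    fun j k hjk => wulffShape_anti fun u _ => by gcongr
  have hInter : ⋂ k : ℕ, (wulffShape C ω fun u => f u - 1 / ((k : ℝ) + 1)) =
      wulffShape C ω f := by
    ext y
    simp only [mem_iInter, mem_wulffShape]
    refine ⟨fun h => ⟨(h 0).1, fun u hu => ?_⟩, fun h k => ⟨h.1, fun u hu => ?_⟩⟩
    · have hlim : Tendsto (fun k : ℕ => -(f u - 1 / ((k : ℝ) + 1))) atTop (𝓝 (-f u)) := by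
        simpa using (tendsto_one_div_add_atTop_nhds_zero_nat.const_sub (f u)).neg
      exact ge_of_tendsto' hlim fun k => (h k).2 u hu
    · linarith [h.2 u hu, (by positivity : (0 : ℝ) < 1 / ((k : ℝ) + 1))]
  rw [← hInter]
  exact tendsto_gaussianMeasure_iInter (fun k => (isClosed_wulffShape hCc).measurableSet) hanti

/-- If `‖h - g‖ < δ` then `I_μ(h) ≤ γⁿ([g - δ]) ∫ (g + δ)^p`, and the right side tends to
`I_μ(g)` as `δ → 0`. -/
lemma upperSemicontinuousOn_wulffFunctional [IsFiniteMeasure μ] (hCc : IsClosed C)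
    (hωc : IsCompact ω) (hp : 0 ≤ p) :
    UpperSemicontinuousOn
      (fun g : ω →ᵇ ℝ => wulffFunctional C ω μ p (Function.extend Subtype.val g 0))
      {g | ∀ u, 0 ≤ g u} := by
  intro g hg y hy
  have hlim := (tendsto_gaussianMeasure_wulffShape_sub (ω := ω) hCc
    (Function.extend Subtype.val g 0)).mul
    (tendsto_setIntegral_add_rpow (μ := μ) hωc hp (continuousOn_extend_val g.continuous)
      fun u hu => by rw [Function.extend_val_apply hu]; exact hg _)
  obtain ⟨k, hk⟩ := (hlim.eventually (gt_mem_nhds hy)).exists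
  filter_upwards [mem_nhdsWithin_of_mem_nhds (ball_mem_nhds g (by positivity :
    (0 : ℝ) < 1 / ((k : ℝ) + 1))), self_mem_nhdsWithin] with h hdist hh
  have hclose : ∀ u ∈ ω, |Function.extend Subtype.val h 0 u - Function.extend Subtype.val g 0 u|
      < 1 / ((k : ℝ) + 1) := fun u hu => by
    rw [Function.extend_val_apply hu, Function.extend_val_apply hu, ← Real.dist_eq]
    exact (BoundedContinuousFunction.dist_coe_le_dist _).trans_lt hdist
  refine lt_of_le_of_lt (mul_le_mul (gaussianMeasure_mono (wulffShape_anti fun u hu => ?_))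
    (setIntegral_rpow_mono hωc hp (continuousOn_extend_val h.continuous)
      ((continuousOn_extend_val g.continuous).add continuousOn_const) (fun u hu => ?_)
      fun u hu => ?_) (setIntegral_nonneg hωc.isClosed.measurableSet fun u hu => ?_)
    (gaussianMeasure_nonneg _)) hk
  · linarith [(abs_lt.mp (hclose u hu)).1]
  · rw [Function.extend_val_apply hu]; exact hh _
  · simp only [Pi.add_apply]
    linarith [(abs_lt.mp (hclose u hu)).2]
  · rw [Function.extend_val_apply hu]; exact Real.rpow_nonneg (hh _) p

lemma wulffFunctional_one_pos [IsFiniteMeasure μ] [Nontrivial (En n)]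
    (hCcone : ∀ x ∈ C, ∀ c : ℝ, 0 ≤ c → c • x ∈ C) (hCint : (interior C).Nonempty)
    (hρ : IsUniformlyObtuse C ω ρ) (hω1 : ω ⊆ closedBall 0 1) (hμ : μ ω ≠ 0) :
    0 < wulffFunctional C ω μ p fun _ => 1 := by
  obtain ⟨x, hx⟩ := exists_closedBall_subset_wulffShape_const hCcone hCint hρ hω1 1 zero_le_one
  simp only [wulffFunctional, Real.one_rpow, setIntegral_const, smul_eq_mul, mul_one]
  exact mul_pos (gaussianMeasure_pos_of_closedBall_subset one_pos hx)
    (ENNReal.toReal_pos hμ (measure_ne_top μ ω))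

lemma exists_boundedContinuousFunction_eq_neg_suppFn {K : Set (En n)} [CompactSpace ω]
    (hρ : IsUniformlyObtuse C ω ρ) (hω1 : ω ⊆ closedBall 0 1) (hK : K ⊆ C) (hne : K.Nonempty)
    {a b : ℝ} (hd : infDist 0 K ∈ Icc a b) :
    ∃ h : ω →ᵇ ℝ, (LipschitzWith (b / ρ).toNNReal h ∧ ∀ u, h u ∈ Icc (ρ * a) b) ∧
      ∀ u : ω, h u = -suppFn K u := by
  have hlip := lipschitzOnWith_iff_restrict.mp (lipschitzOnWith_neg_suppFn hρ hω1 hK hne)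
  refine ⟨.mkOfCompact ⟨_, hlip.continuous⟩, ⟨hlip.weaken ?_, fun u => ?_⟩, fun u => rfl⟩
  · exact Real.toNNReal_le_toNNReal (div_le_div_of_nonneg_right hd.2 hρ.1.le)
  · have := neg_suppFn_mem_Icc hρ hω1 hK hne u.2
    exact ⟨(mul_le_mul_of_nonneg_left hd.1 hρ.1.le).trans this.1, this.2.trans hd.2⟩

theorem exists_forall_wulffFunctional_le [IsFiniteMeasure μ] [Nontrivial (En n)]
    (hCc : IsClosed C) (hCcone : ∀ x ∈ C, ∀ c : ℝ, 0 ≤ c → c • x ∈ C)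
    (hCint : (interior C).Nonempty) (hρ : IsUniformlyObtuse C ω ρ) (hω1 : ω ⊆ closedBall 0 1)
    (hωc : IsCompact ω) (hμ : μ ω ≠ 0) (hp : 0 < p) :
    ∃ g : En n → ℝ, ContinuousOn g ω ∧ (∀ u ∈ ω, 0 < g u) ∧
      ∀ f, ContinuousOn f ω → (∀ u ∈ ω, 0 < f u) →
        wulffFunctional C ω μ p f ≤ wulffFunctional C ω μ p g := by
  have : CompactSpace ω := isCompact_iff_compactSpace.mp hωc
  set I := wulffFunctional C ω μ p
  have hμω : 0 < μ.real ω := ENNReal.toReal_pos hμ (measure_ne_top μ ω)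
  have hI1 : 0 < I fun _ => 1 := wulffFunctional_one_pos hCcone hCint hρ hω1 hμ
  obtain ⟨a, ha, b, hab⟩ := exists_gaussianMeasure_mul_rpow_lt (n := n) hp (div_pos hI1 hμω)
  have hm : 0 < min (ρ * a) 1 := lt_min (mul_pos hρ.1 ha) one_pos
  set A := {g : ω →ᵇ ℝ |
    LipschitzWith (b / ρ).toNNReal g ∧ ∀ u, g u ∈ Icc (min (ρ * a) 1) (max b 1)}
  have h1A : BoundedContinuousFunction.const ω (1 : ℝ) ∈ A :=
    ⟨LipschitzWith.const' 1, fun _ => ⟨min_le_right _ _, le_max_right _ _⟩⟩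
  obtain ⟨g, hgA, hgmax⟩ := ((upperSemicontinuousOn_wulffFunctional (μ := μ) hCc hωc hp.le).mono
    fun g hg u => hm.le.trans (hg.2 u).1).exists_isMaxOn ⟨_, h1A⟩
    (BoundedContinuousFunction.isCompact_setOf_lipschitzWith_mem_Icc _ _ _)
  refine ⟨_, continuousOn_extend_val g.continuous, fun u hu => ?_, fun f hf hf0 => ?_⟩
  · rw [Function.extend_val_apply hu]; exact hm.trans_le (hgA.2 _).1
  set K := wulffShape C ω f
  have hne : K.Nonempty := wulffShape_nonempty hCcone hCint hρ hω1 (hωc.bddAbove_image hf)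
  refine (wulffFunctional_le_neg_suppFn hρ hω1 hωc hp.le hf (fun u hu => (hf0 u hu).le)
    hne).trans ?_
  by_cases hd : infDist 0 K ∈ Icc a b
  · obtain ⟨h, ⟨hlip, hIcc⟩, hh⟩ :=
      exists_boundedContinuousFunction_eq_neg_suppFn hρ hω1 wulffShape_subset hne hd
    calc I (fun u => -suppFn K u) = I (Function.extend Subtype.val h 0) :=
          wulffFunctional_congr hωc.isClosed.measurableSet fun u hu => by
            rw [Function.extend_val_apply hu, hh]
      _ ≤ I (Function.extend Subtype.val g 0) := hgmax ⟨hlip, fun u =>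
          ⟨(min_le_left _ _).trans (hIcc u).1, (hIcc u).2.trans (le_max_left _ _)⟩⟩
  · have hsmall := hab K _ (isClosed_wulffShape hCc).measurableSet infDist_nonneg hd
      fun y hy => by simpa using infDist_le_dist_of_mem (x := 0) hy
    rw [lt_div_iff₀ hμω] at hsmall
    apply le_of_lt
    calc I (fun u => -suppFn K u) ≤ gaussianMeasure n K * (infDist 0 K ^ p * μ.real ω) :=
          wulffFunctional_neg_suppFn_le hρ hω1 hp.le hne
      _ < I fun _ => 1 := by linarith
      _ = I (Function.extend Subtype.val (BoundedContinuousFunction.const ω 1) 0) :=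
          wulffFunctional_congr hωc.isClosed.measurableSet fun u hu => by
            rw [Function.extend_val_apply hu]; rfl
      _ ≤ I (Function.extend Subtype.val g 0) := hgmax h1A

end Functional

theorem exists_maximizer_I_mu_general {n : ℕ} (C : Set (En n)) (hC : IsPointedCone C)
    (ω : Set (En n)) (hω : ω.Nonempty) (hωc : IsCompact ω) (hωΩ : ω ⊆ OmegaSet C)
    (μ : Measure (En n)) [IsFiniteMeasure μ] (hμ : μ ω ≠ 0)
    (p : ℝ) (hp : 0 < p) :
    ∃ K : Set (En n), InKClass C ω K ∧
      ∀ f : En n → ℝ, ContinuousOn f ω → (∀ u ∈ ω, 0 < f u) →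
        gaussianMeasure n (wulffShape C ω f) * ∫ u in ω, f u ^ p ∂μ ≤
          gaussianMeasure n K * ∫ u in ω, (-suppFn K u) ^ p ∂μ := by
  obtain ⟨hCc, hCconv, hCcone, hCint, -⟩ := hC
  obtain ⟨ρ, hρ⟩ := exists_isUniformlyObtuse hωc fun u hu => (hωΩ hu).2
  have hω1 : ω ⊆ closedBall 0 1 := fun u hu => sphere_subset_closedBall (hωΩ hu).1
  obtain ⟨u₀, hu₀⟩ := hω
  have : Nontrivial (En n) := nontrivial_of_ne u₀ 0 (ne_zero_of_mem_unit_sphere ⟨u₀, (hωΩ hu₀).1⟩)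
  obtain ⟨g, hgc, hg0, hgmax⟩ :=
    exists_forall_wulffFunctional_le hCc hCcone hCint hρ hω1 hωc hμ hp
  have hne := wulffShape_nonempty hCcone hCint hρ hω1 (hωc.bddAbove_image hgc)
  refine ⟨_, inKClass_wulffShape hCc hCconv hCcone hρ.subset_polarCone ⟨u₀, hu₀⟩ hg0 hne,
    fun f hf hf0 => ?_⟩
  calc wulffFunctional C ω μ p f ≤ wulffFunctional C ω μ p g := hgmax f hf hf0
    _ ≤ wulffFunctional C ω μ p (fun u => -suppFn (wulffShape C ω g) u) :=
        wulffFunctional_le_neg_suppFn hρ hω1 hωc hp.le hgc (fun u hu => (hg0 u hu).le) hne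
    _ = _ := by rw [wulffFunctional, wulffShape_neg_suppFn hρ.subset_polarCone hne]

/-- Existence of a maximizer for `I_μ(f) = γⁿ([f]) ∫_ω f^p dμ` (with `p > 0`) over positive
continuous functions on `ω`, attained at the absolute support function of some `K ∈ 𝒦(C,ω)`. -/
theorem exists_maximizer_I_mu {n : ℕ} (hn : 1 ≤ n) (C : Set (En n)) (hC : IsPointedCone C)
    (ω : Set (En n)) (hω : ω.Nonempty) (hωc : IsCompact ω) (hωΩ : ω ⊆ OmegaSet C)
    (μ : Measure (En n)) [IsFiniteMeasure μ] (hμsupp : μ ωᶜ = 0) (hμ : μ ω ≠ 0)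
    (p : ℝ) (hp : 0 < p) :
    ∃ K : Set (En n), InKClass C ω K ∧
      ∀ f : En n → ℝ, ContinuousOn f ω → (∀ u ∈ ω, 0 < f u) →
        gaussianMeasure n (wulffShape C ω f) * ∫ u in ω, f u ^ p ∂μ ≤
          gaussianMeasure n K * ∫ u in ω, (-suppFn K u) ^ p ∂μ :=
  exists_maximizer_I_mu_general C hC ω hω hωc hωΩ μ hμ p hp
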